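/- Let φ(x₁,…,x_k) be a positive sentence (prenex form, no negation connective) inerre the first-order language of groups with parameters a₁,…,a_k ∈ Aut(Q̄). Then Aut(Q̄) ⊨ φ(a₁,…,a_k) if and only if for every n ∈ ℕ, Aut(Fₙ) ⊨ φ(a₁↾Fₙ,…,a_k↾Fₙ). -/

import Mathlib

noncomputable section

open Filter

/-! ### Computability preliminaries -/

/-- The finite initial segment of length `k` of a sequence. -/
def seg (f : ℕ → ℕ) (k : ℕ) : List ℕ := (List.range k).map f

/-- The finite initial segment of length `k` of an element of Cantor space. -/
def segB (A : ℕ → Bool) (k : ℕ) : List Bool := (List.range k).map A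

/-- The join (interleaving) of two sequences. -/
def joinSeq (f g : ℕ → ℕ) : ℕ → ℕ := fun n => if n % 2 = 0 then f (n / 2) else g (n / 2)

/-- Turing reducibility: there is a Turing functional (presented as a computable map on
finite oracle segments, consistent along the oracle `g`) computing `f` from `g`. -/
def TuringReducibleTo (f g : ℕ → ℕ) : Prop :=
  ∃ φ : List ℕ → ℕ → Option ℕ, Computable₂ φ ∧
    (∀ n k₁ k₂ m₁ m₂, φ (seg g k₁) n = some m₁ → φ (seg g k₂) n = some m₂ → m₁ = m₂) ∧
    (∀ n, ∃ k, φ (seg g k) n = some (f n))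

/-- A Turing ideal, presented as a degree-invariant collection of functions `ℕ → ℕ`
closed under join and downward closed under Turing reducibility. -/
structure IsTuringIdeal (I : Set (ℕ → ℕ)) : Prop where
  nonempty : I.Nonempty
  ne_univ : I ≠ Set.univ
  join_mem : ∀ f g, f ∈ I → g ∈ I → joinSeq f g ∈ I
  downward : ∀ f g, f ∈ I → TuringReducibleTo g f → g ∈ I

/-- A (characteristic function of a) subtree of `ω^{<ω}`. -/
def IsTreeB (T : List ℕ → Bool) : Prop :=
  ∀ l₁ l₂ : List ℕ, l₁ <+: l₂ → T l₂ = true → T l₁ = true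

/-- A function on an encodable domain is computable from the oracle `c`. -/
def funRed {α β : Type} [Denumerable α] [Primcodable β] (f : α → β) (c : ℕ → ℕ) : Prop :=
  TuringReducibleTo (fun n => Encodable.encode (f (Denumerable.ofNat α n))) c

/-- `d` is a PA degree relative to `c`: `d` computes a path through every infinite
`c`-computable finite-branching (`c`-computably bounded) tree. -/
def PARel (d c : ℕ → ℕ) : Prop :=
  ∀ (T : List ℕ → Bool) (b : List ℕ → ℕ),
    IsTreeB T → funRed T c → funRed b c →
    (∀ l x, T (l ++ [x]) = true → x < b l) →
    (∀ n, ∃ l : List ℕ, l.length = n ∧ T l = true) →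
    ∃ p : ℕ → ℕ, TuringReducibleTo p d ∧ ∀ k, T (seg p k) = true

/-- A Scott ideal: a Turing ideal containing, for each of its members,
a PA degree relative to that member. -/
def IsScottIdeal (I : Set (ℕ → ℕ)) : Prop :=
  IsTuringIdeal I ∧ ∀ c ∈ I, ∃ d ∈ I, PARel d c

/-- A set of natural numbers is `Π⁰₁`. -/
def Pi01 (S : Set ℕ) : Prop :=
  ∃ R : ℕ → ℕ → Bool, Computable₂ R ∧ ∀ m, m ∈ S ↔ ∀ s, R m s = true

/-- A set of natural numbers is `Σ⁰₂`. -/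
def Sigma02 (S : Set ℕ) : Prop :=
  ∃ R : ℕ → ℕ → ℕ → Bool,
    Computable (fun x : ℕ × ℕ × ℕ => R x.1 x.2.1 x.2.2) ∧
    ∀ m, m ∈ S ↔ ∃ a, ∀ b, R m a b = true

/-- The jump of an oracle `A : ℕ → ℕ`: the `i`-th partial computable function,
run on (codes of) finite initial segments of `A` with input `i`, halts. -/
def haltsRelN (A : ℕ → ℕ) (i : ℕ) : Prop :=
  ∃ s, ((Denumerable.ofNat Nat.Partrec.Code i).eval
      (Nat.pair (Encodable.encode (seg A s)) i)).Dom

/-- The jump of an oracle `A : ℕ → Bool`. -/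
def haltsRelB (A : ℕ → Bool) (i : ℕ) : Prop :=
  ∃ s, ((Denumerable.ofNat Nat.Partrec.Code i).eval
      (Nat.pair (Encodable.encode (segB A s)) i)).Dom

/-- The Turing functional with index `e`, given oracle `A`, computes the total
function `B` (consistently along `A`). -/
def OracleComputes (e : ℕ) (A B : ℕ → ℕ) : Prop :=
  (∀ n s₁ s₂ m₁ m₂,
      (Denumerable.ofNat Nat.Partrec.Code e).eval
          (Nat.pair (Encodable.encode (seg A s₁)) n) = Part.some m₁ →
      (Denumerable.ofNat Nat.Partrec.Code e).eval
          (Nat.pair (Encodable.encode (seg A s₂)) n) = Part.some m₂ →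
      m₁ = m₂) ∧
  (∀ n, ∃ s,
      (Denumerable.ofNat Nat.Partrec.Code e).eval
          (Nat.pair (Encodable.encode (seg A s)) n) = Part.some (B n))

/-- `φ` superapproximates `F : 2^ω → 2^ω`: for every oracle `A` and every `n`, the
stage-`s` values `φ(A↾s, n, s)` converge to the characteristic function of the
jump of `F(A)` at `n`. -/
def Superapproximates (φ : List Bool → ℕ → ℕ → Bool) (F : (ℕ → Bool) → ℕ → Bool) : Prop :=
  ∀ A : ℕ → Bool, ∀ n : ℕ, ∃ b : Bool,
    (∀ᶠ s in atTop, φ (segB A s) n s = b) ∧ (b = true ↔ haltsRelB (F A) n)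

/-- `F : 2^ω → 2^ω` is superapproximable. -/
def Superapproximable (F : (ℕ → Bool) → ℕ → Bool) : Prop :=
  ∃ φ : List Bool → ℕ → ℕ → Bool,
    Computable (fun x : List Bool × ℕ × ℕ => φ x.1 x.2.1 x.2.2) ∧ Superapproximates φ F

/-- The Turing functional with index `e` superapproximates `F : 2^ω → 2^ω`. -/
def CodeSuperapprox (e : ℕ) (F : (ℕ → Bool) → ℕ → Bool) : Prop :=
  ∀ A : ℕ → Bool, ∀ n : ℕ, ∃ b : Bool,
    (∀ᶠ s in atTop,
      (Denumerable.ofNat Nat.Partrec.Code e).eval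
          (Nat.pair (Encodable.encode (segB A s)) (Nat.pair n s)) = Part.some (cond b 1 0)) ∧
    (b = true ↔ haltsRelB (F A) n)

/-! ### The first-order language of groups -/

/-- Terms of the language of groups, with variables among `Fin k`. -/
inductive GrpTerm : ℕ → Type
  | var : ∀ {k}, Fin k → GrpTerm k
  | one : ∀ {k}, GrpTerm k
  | mul : ∀ {k}, GrpTerm k → GrpTerm k → GrpTerm k
  | inv : ∀ {k}, GrpTerm k → GrpTerm k

/-- Evaluation of a group term in a group `G` under a valuation of the variables. -/
def GrpTerm.eval {G : Type*} [Group G] : ∀ {k}, GrpTerm k → (Fin k → G) → G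
  | _, .var i, v => v i
  | _, .one, _ => 1
  | _, .mul t s, v => t.eval v * s.eval v
  | _, .inv t, v => (t.eval v)⁻¹

/-- First-order formulas of the language of groups (with negation pushed to atoms),
with free variables among `Fin k`.  Quantifiers bind the variable `0`. -/
inductive GrpFormula : ℕ → Type
  | eq : ∀ {k}, GrpTerm k → GrpTerm k → GrpFormula k
  | ne : ∀ {k}, GrpTerm k → GrpTerm k → GrpFormula k
  | and : ∀ {k}, GrpFormula k → GrpFormula k → GrpFormula k
  | or : ∀ {k}, GrpFormula k → GrpFormula k → GrpFormula k
  | all : ∀ {k}, GrpFormula (k + 1) → GrpFormula k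
  | ex : ∀ {k}, GrpFormula (k + 1) → GrpFormula k

/-- Tarskian satisfaction of a group formula in a group `G`. -/
def GrpFormula.Sat {G : Type*} [Group G] : ∀ {k}, GrpFormula k → (Fin k → G) → Prop
  | _, .eq t s, v => t.eval v = s.eval v
  | _, .ne t s, v => t.eval v ≠ s.eval v
  | _, .and φ ψ, v => φ.Sat v ∧ ψ.Sat v
  | _, .or φ ψ, v => φ.Sat v ∨ ψ.Sat v
  | _, .all φ, v => ∀ g : G, φ.Sat (Fin.cons g v)
  | _, .ex φ, v => ∃ g : G, φ.Sat (Fin.cons g v)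

/-- Satisfaction relativized to a subset `S` of `G` (e.g. a subgroup):
quantifiers range over `S`. -/
def GrpFormula.SatOn {G : Type*} [Group G] (S : Set G) :
    ∀ {k}, GrpFormula k → (Fin k → G) → Prop
  | _, .eq t s, v => t.eval v = s.eval v
  | _, .ne t s, v => t.eval v ≠ s.eval v
  | _, .and φ ψ, v => φ.SatOn S v ∧ ψ.SatOn S v
  | _, .or φ ψ, v => φ.SatOn S v ∨ ψ.SatOn S v
  | _, .all φ, v => ∀ g ∈ S, φ.SatOn S (Fin.cons g v)
  | _, .ex φ, v => ∃ g ∈ S, φ.SatOn S (Fin.cons g v)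

/-- A formula is positive iff it does not use negation (i.e. no negated atoms). -/
def GrpFormula.Positive : ∀ {k}, GrpFormula k → Prop
  | _, .eq _ _ => True
  | _, .ne _ _ => False
  | _, .and φ ψ => φ.Positive ∧ ψ.Positive
  | _, .or φ ψ => φ.Positive ∧ ψ.Positive
  | _, .all φ => φ.Positive
  | _, .ex φ => φ.Positive

/-- A formula is quantifier-free iff it uses no quantifiers. -/
def GrpFormula.QuantifierFree : ∀ {k}, GrpFormula k → Prop
  | _, .eq _ _ => True
  | _, .ne _ _ => True
  | _, .and φ ψ => φ.QuantifierFree ∧ ψ.QuantifierFree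
  | _, .or φ ψ => φ.QuantifierFree ∧ ψ.QuantifierFree
  | _, .all _ => False
  | _, .ex _ => False

/-- A quantifier-free formula is negative iff it is built from negated atoms
(inequations) using `∧` and `∨`. -/
def GrpFormula.NegQF : ∀ {k}, GrpFormula k → Prop
  | _, .eq _ _ => False
  | _, .ne _ _ => True
  | _, .and φ ψ => φ.NegQF ∧ ψ.NegQF
  | _, .or φ ψ => φ.NegQF ∧ ψ.NegQF
  | _, .all _ => False
  | _, .ex _ => False

/-- A Gödel numbering of group terms. -/
def GrpTerm.encode : ∀ {k}, GrpTerm k → ℕ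
  | _, .var i => Nat.pair 0 i.val
  | _, .one => Nat.pair 1 0
  | _, .mul t s => Nat.pair 2 (Nat.pair t.encode s.encode)
  | _, .inv t => Nat.pair 3 t.encode

/-- A Gödel numbering of group formulas. -/
def GrpFormula.encode : ∀ {k}, GrpFormula k → ℕ
  | _, .eq t s => Nat.pair 0 (Nat.pair t.encode s.encode)
  | _, .ne t s => Nat.pair 1 (Nat.pair t.encode s.encode)
  | _, .and φ ψ => Nat.pair 2 (Nat.pair φ.encode ψ.encode)
  | _, .or φ ψ => Nat.pair 3 (Nat.pair φ.encode ψ.encode)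
  | _, .all φ => Nat.pair 4 φ.encode
  | _, .ex φ => Nat.pair 5 φ.encode

/-- `Σ₀`- and `Π₀`-separated formulas: positive formulas, or conjunctions of a positive
formula with a quantifier-free negative formula. -/
inductive Sep0 : ∀ {k}, GrpFormula k → Prop
  | pos {k} {φ : GrpFormula k} : φ.Positive → Sep0 φ
  | conj {k} {φ ψ : GrpFormula k} : φ.Positive → ψ.NegQF → Sep0 (φ.and ψ)

mutual
  /-- `Σₙ`-separated formulas. -/
  inductive SigmaSep : ℕ → ∀ {k}, GrpFormula k → Prop
    | base {k} {φ : GrpFormula k} : Sep0 φ → SigmaSep 0 φ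
    | ofPi {n k} {φ : GrpFormula k} : PiSep n φ → SigmaSep (n + 1) φ
    | ex {n k} {φ : GrpFormula (k + 1)} : SigmaSep (n + 1) φ → SigmaSep (n + 1) φ.ex

  /-- `Πₙ`-separated formulas. -/
  inductive PiSep : ℕ → ∀ {k}, GrpFormula k → Prop
    | base {k} {φ : GrpFormula k} : Sep0 φ → PiSep 0 φ
    | ofSigma {n k} {φ : GrpFormula k} : SigmaSep n φ → PiSep (n + 1) φ
    | all {n k} {φ : GrpFormula (k + 1)} : PiSep (n + 1) φ → PiSep (n + 1) φ.all
end

mutual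
  /-- Positive prenex `Σₙ` formulas. -/
  inductive PosSigma : ℕ → ∀ {k}, GrpFormula k → Prop
    | base {k} {φ : GrpFormula k} : φ.QuantifierFree → φ.Positive → PosSigma 0 φ
    | ofPi {n k} {φ : GrpFormula k} : PosPi n φ → PosSigma (n + 1) φ
    | ex {n k} {φ : GrpFormula (k + 1)} : PosSigma (n + 1) φ → PosSigma (n + 1) φ.ex

  /-- Positive prenex `Πₙ` formulas. -/
  inductive PosPi : ℕ → ∀ {k}, GrpFormula k → Prop
    | base {k} {φ : GrpFormula k} : φ.QuantifierFree → φ.Positive → PosPi 0 φ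
    | ofSigma {n k} {φ : GrpFormula k} : PosSigma n φ → PosPi (n + 1) φ
    | all {n k} {φ : GrpFormula (k + 1)} : PosPi (n + 1) φ → PosPi (n + 1) φ.all
end

/-- Purely existential formulas: a block of `∃`'s applied to a quantifier-free formula. -/
inductive ExistentialForm : ∀ {k}, GrpFormula k → Prop
  | base {k} {φ : GrpFormula k} : φ.QuantifierFree → ExistentialForm φ
  | ex {k} {φ : GrpFormula (k + 1)} : ExistentialForm φ → ExistentialForm φ.ex

/-- Purely universal formulas: a block of `∀`'s applied to a quantifier-free formula. -/
inductive UniversalForm : ∀ {k}, GrpFormula k → Prop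
  | base {k} {φ : GrpFormula k} : φ.QuantifierFree → UniversalForm φ
  | all {k} {φ : GrpFormula (k + 1)} : UniversalForm φ → UniversalForm φ.all

/-- Prefix a block of `m` existential quantifiers. -/
def exBlock {k : ℕ} : ∀ m : ℕ, GrpFormula (k + m) → GrpFormula k
  | 0, φ => φ
  | m + 1, φ => exBlock m φ.ex

/-- Prefix a block of `m` universal quantifiers. -/
def allBlock {k : ℕ} : ∀ m : ℕ, GrpFormula (k + m) → GrpFormula k
  | 0, φ => φ
  | m + 1, φ => allBlock m φ.all

/-- Extend a valuation of the `k` parameters by a valuation of the `m`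
quantified variables (which occupy the initial positions). -/
def consTuple {G : Type*} : ∀ {m k : ℕ}, (Fin m → G) → (Fin k → G) → Fin (k + m) → G
  | 0, _, _, a => a
  | _ + 1, _, g, a => Fin.cons (g 0) (consTuple (fun i => g i.succ) a)

/-- The join of an `m`-tuple of sequences. -/
def tupleJoin {m : ℕ} (v : Fin m → ℕ → ℕ) : ℕ → ℕ :=
  fun n => Encodable.encode (List.ofFn fun i => v i n)

/-! ### The computable presentation of `Q̄` and its Galois group -/

/-- A fixed computable presentation of the algebraic closure of `ℚ`. -/
abbrev Qbar : Type := AlgebraicClosure ℚ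

/-- The absolute Galois group of `ℚ`, i.e. the automorphism group of `Q̄`. -/
abbrev GalQ : Type := Qbar ≃ₐ[ℚ] Qbar

/-- A computable presentation of `Q̄` together with the fixed computable chain
`ℚ = F₀ ⊂ F₁ ⊂ ⋯` of finite normal extensions of `ℚ` with union `Q̄`,
each generated by a primitive generator `zₙ`. -/
structure GaloisPresentation where
  e : Qbar ≃ ℕ
  F : ℕ → IntermediateField ℚ Qbar
  z : ℕ → Qbar
  F_zero : F 0 = ⊥
  F_lt : ∀ n, F n < F (n + 1)
  normal : ∀ n, Normal ℚ (F n)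
  finiteDim : ∀ n, FiniteDimensional ℚ (F n)
  unionEq : ∀ x : Qbar, ∃ n, x ∈ F n
  genEq : ∀ n, F n = IntermediateField.adjoin ℚ {z n}
  add_comp : Computable₂ fun a b => e (e.symm a + e.symm b)
  mul_comp : Computable₂ fun a b => e (e.symm a * e.symm b)
  neg_comp : Computable fun a => e (-e.symm a)
  inv_comp : Computable fun a => e (e.symm a)⁻¹
  mem_dec : ∃ d : ℕ → ℕ → Bool, Computable₂ d ∧ ∀ n a, d n a = true ↔ e.symm a ∈ F n
  z_comp : Computable fun n => e (z n)

/-- The identification of an automorphism `f` with the sequence `(f(z₁), f(z₂), …)`. -/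
def GaloisPresentation.seqOf (P : GaloisPresentation) (f : GalQ) : ℕ → ℕ :=
  fun n => P.e (f (P.z (n + 1)))

/-- The restriction of an automorphism of `Q̄` to the finite normal extension `Fₙ`. -/
def GaloisPresentation.restrictAut (P : GaloisPresentation) (n : ℕ) (f : GalQ) :
    ↥(P.F n) ≃ₐ[ℚ] ↥(P.F n) :=
  haveI := P.normal n
  AlgEquiv.restrictNormal f ↥(P.F n)

/-- The level-`n` node of the Galois tree determined by an automorphism `σ`. -/
def nodeOf (P : GaloisPresentation) (n : ℕ) (σ : GalQ) : List ℕ :=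
  (List.range n).map fun i => P.e (σ (P.z (i + 1)))

/-- Membership in the Galois tree `T_Q̄`: the nodes at level `n` are the tuples
`(σ(z₁), …, σ(zₙ))` for automorphisms `σ`. -/
def TQmem (P : GaloisPresentation) (l : List ℕ) : Prop :=
  ∃ σ : GalQ, l = nodeOf P l.length σ

/-- The join of the parameter tuple `a`, as a single oracle. -/
def paramJoin (P : GaloisPresentation) {k : ℕ} (a : Fin k → GalQ) : ℕ → ℕ :=
  tupleJoin fun i => P.seqOf (a i)

/-- A bare computable presentation of `Q̄` (without a fixed chain): the field
operations are computable and finitely generated subfields are uniformly decidable. -/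
structure CompPresentation where
  e : Qbar ≃ ℕ
  add_comp : Computable₂ fun a b => e (e.symm a + e.symm b)
  mul_comp : Computable₂ fun a b => e (e.symm a * e.symm b)
  neg_comp : Computable fun a => e (-e.symm a)
  inv_comp : Computable fun a => e (e.symm a)⁻¹
  fg_dec : ∃ d : List ℕ → ℕ → Bool, Computable₂ d ∧
    ∀ (l : List ℕ) (a : ℕ),
      d l a = true ↔ e.symm a ∈ IntermediateField.adjoin ℚ {x : Qbar | ∃ b ∈ l, e.symm b = x}

end

/-!
Restriction to `Fₙ` is a surjective homomorphism, and positive formulas pass to homomorphic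
images; this gives one direction. For the converse, induct on the formula. Since the kernels of
the restrictions shrink as `n` grows, satisfaction at level `n` descends to every lower level, which
settles the `∨` case. In the `∃` case the automorphisms whose restriction to `Fₙ` is a witness
form a decreasing sequence of nonempty closed subsets of the compact group `Gal(Q̄/ℚ)` (closed
because restriction is continuous into the discrete group `Aut(Fₙ)`), so some automorphism is a
witness at every level.
-/

theorem GrpTerm.eval_map {G H : Type*} [Group G] [Group H] (f : G →* H) {k : ℕ}
    (t : GrpTerm k) (v : Fin k → G) : f (t.eval v) = t.eval (f ∘ v) := by
  induction t with
  | var i => simp only [GrpTerm.eval, Function.comp_apply]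
  | one => simp only [GrpTerm.eval, map_one]
  | mul t s ht hs => simp only [GrpTerm.eval, map_mul, ht, hs]
  | inv t ht => simp only [GrpTerm.eval, map_inv, ht]

namespace GrpFormula.Positive

variable {G H H' : Type*} [Group G] [Group H] [Group H']

theorem sat_map_of_surjective {k : ℕ} {φ : GrpFormula k} (hφ : φ.Positive) {f : G →* H}
    (hf : Function.Surjective f) {v : Fin k → G} (h : φ.Sat v) : φ.Sat (f ∘ v) := by
  induction φ with
  | eq t s =>
    simp only [Sat, ← GrpTerm.eval_map] at h ⊢
    rw [h]
  | ne => exact hφ.elim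
  | and φ ψ ihφ ihψ => exact ⟨ihφ hφ.1 h.1, ihψ hφ.2 h.2⟩
  | or φ ψ ihφ ihψ => exact h.imp (ihφ hφ.1) (ihψ hφ.2)
  | all φ ih =>
    intro x
    obtain ⟨g, rfl⟩ := hf x
    simpa only [Fin.comp_cons] using ih hφ (h g)
  | ex φ ih =>
    obtain ⟨g, hg⟩ := h
    exact ⟨f g, by simpa only [Fin.comp_cons] using ih hφ hg⟩

theorem sat_map_of_ker_le {k : ℕ} {φ : GrpFormula k} (hφ : φ.Positive) {f : G →* H}
    {f' : G →* H'} (hf : Function.Surjective f) (hf' : Function.Surjective f')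
    (hker : f.ker ≤ f'.ker) {v : Fin k → G} (h : φ.Sat (f ∘ v)) : φ.Sat (f' ∘ v) := by
  set ρ := f.liftOfSurjective hf ⟨f', hker⟩
  have hρf : ρ ∘ f = f' := funext (f.liftOfRightInverse_comp_apply _ _ ⟨f', hker⟩)
  have hρ : Function.Surjective ρ := by
    rw [← hρf] at hf'
    exact hf'.of_comp
  rw [← hρf]
  exact hφ.sat_map_of_surjective hρ h

section InverseSystem

variable {Γ : ℕ → Type*} [∀ n, Group (Γ n)] {π : ∀ n, G →* Γ n}

theorem sat_map_of_le (hsurj : ∀ n, Function.Surjective (π n))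
    (hker : Antitone fun n => (π n).ker) {k : ℕ} {φ : GrpFormula k} (hφ : φ.Positive)
    {m n : ℕ} (hmn : m ≤ n) {v : Fin k → G} (h : φ.Sat (π n ∘ v)) : φ.Sat (π m ∘ v) :=
  hφ.sat_map_of_ker_le (hsurj n) (hsurj m) (hker hmn) h

variable [TopologicalSpace G] [CompactSpace G] [∀ n, TopologicalSpace (Γ n)]
  [∀ n, DiscreteTopology (Γ n)]

theorem exists_forall_sat_map_cons (hcont : ∀ n, Continuous (π n))
    (hsurj : ∀ n, Function.Surjective (π n)) (hker : Antitone fun n => (π n).ker) {k : ℕ}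
    {φ : GrpFormula (k + 1)} (hφ : φ.Positive) {v : Fin k → G}
    (h : ∀ n, ∃ x : Γ n, φ.Sat (Fin.cons x (π n ∘ v))) :
    ∃ g : G, ∀ n, φ.Sat (π n ∘ Fin.cons g v) := by
  set C : ℕ → Set G := fun n => π n ⁻¹' {x | φ.Sat (Fin.cons x (π n ∘ v))}
  have hC : ∀ n g, g ∈ C n ↔ φ.Sat (π n ∘ Fin.cons g v) := by
    simp only [C, Set.mem_preimage, Set.mem_ofPred_eq, Fin.comp_cons, implies_true]
  have hclosed : ∀ n, IsClosed (C n) := fun n => (isClosed_discrete _).preimage (hcont n)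
  have hne : ∀ n, (C n).Nonempty := fun n => by
    obtain ⟨x, hx⟩ := h n
    obtain ⟨g, rfl⟩ := hsurj n x
    exact ⟨g, hx⟩
  have hanti : ∀ n, C (n + 1) ⊆ C n := fun n g hg =>
    (hC n g).2 <| hφ.sat_map_of_le hsurj hker n.le_succ ((hC _ g).1 hg)
  obtain ⟨g, hg⟩ := IsCompact.nonempty_iInter_of_sequence_nonempty_isCompact_isClosed C hanti hne
    (hclosed 0).isCompact hclosed
  exact ⟨g, fun n => (hC n g).1 (Set.mem_iInter.1 hg n)⟩

theorem sat_of_forall_sat_map (hcont : ∀ n, Continuous (π n))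
    (hsurj : ∀ n, Function.Surjective (π n)) (hker : Antitone fun n => (π n).ker)
    (hsep : ∀ g g' : G, (∀ n, π n g = π n g') → g = g') {k : ℕ} {φ : GrpFormula k}
    (hφ : φ.Positive) {v : Fin k → G} (h : ∀ n, φ.Sat (π n ∘ v)) : φ.Sat v := by
  induction φ with
  | eq t s =>
    refine hsep _ _ fun n => ?_
    simpa only [Sat, GrpTerm.eval_map] using h n
  | ne => exact hφ.elim
  | and φ ψ ihφ ihψ => exact ⟨ihφ hφ.1 fun n => (h n).1, ihψ hφ.2 fun n => (h n).2⟩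
  | or φ ψ ihφ ihψ =>
    by_cases hall : ∀ n, φ.Sat (π n ∘ v)
    · exact Or.inl (ihφ hφ.1 hall)
    · rw [not_forall] at hall
      obtain ⟨n₀, hn₀⟩ := hall
      refine Or.inr (ihψ hφ.2 fun n => ?_)
      rcases h (max n n₀) with hl | hr
      · exact absurd (hφ.1.sat_map_of_le hsurj hker (le_max_right n n₀) hl) hn₀
      · exact hφ.2.sat_map_of_le hsurj hker (le_max_left n n₀) hr
  | all φ ih =>
    intro g
    exact ih hφ fun n => by simpa only [Fin.comp_cons] using h n (π n g)
  | ex φ ih =>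
    obtain ⟨g, hg⟩ := hφ.exists_forall_sat_map_cons hcont hsurj hker h
    exact ⟨g, ih hφ hg⟩

theorem sat_iff_forall_sat_map (hcont : ∀ n, Continuous (π n))
    (hsurj : ∀ n, Function.Surjective (π n)) (hker : Antitone fun n => (π n).ker)
    (hsep : ∀ g g' : G, (∀ n, π n g = π n g') → g = g') {k : ℕ} {φ : GrpFormula k}
    (hφ : φ.Positive) (v : Fin k → G) : φ.Sat v ↔ ∀ n, φ.Sat (π n ∘ v) :=
  ⟨fun h _ => hφ.sat_map_of_surjective (hsurj _) h, hφ.sat_of_forall_sat_map hcont hsurj hker hsep⟩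

end InverseSystem

end GrpFormula.Positive

section Galois

variable {K L : Type*} [Field K] [Field L] [Algebra K L]

theorem AlgEquiv.eq_of_forall_restrictNormalHom_eq {ι : Type*} (F : ι → IntermediateField K L)
    [∀ i, Normal K (F i)] (hcover : ∀ x, ∃ i, x ∈ F i) {σ τ : L ≃ₐ[K] L}
    (h : ∀ i, restrictNormalHom (F i) σ = restrictNormalHom (F i) τ) : σ = τ := by
  ext x
  obtain ⟨i, hx⟩ := hcover x
  simpa only [restrictNormalHom_apply] using congrArg (fun ρ => (ρ ⟨x, hx⟩ : L)) (h i)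

theorem GrpFormula.Positive.sat_iff_forall_sat_restrictNormalHom [IsGalois K L]
    (F : ℕ → IntermediateField K L) [normal : ∀ n, Normal K (F n)]
    [finiteDimensional : ∀ n, FiniteDimensional K (F n)]
    (hmono : Monotone F) (hcover : ∀ x, ∃ n, x ∈ F n) {k : ℕ} {φ : GrpFormula k}
    (hφ : φ.Positive) (v : Fin k → L ≃ₐ[K] L) :
    φ.Sat v ↔ ∀ n, φ.Sat (AlgEquiv.restrictNormalHom (F n) ∘ v) := by
  refine hφ.sat_iff_forall_sat_map (fun n => InfiniteGalois.restrictNormalHom_continuous (F n))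
    (fun n => AlgEquiv.restrictNormalHom_surjective L) (fun m n hmn => ?_)
    (fun σ τ => AlgEquiv.eq_of_forall_restrictNormalHom_eq F hcover) v
  simp only [IntermediateField.restrictNormalHom_ker]
  exact IntermediateField.fixingSubgroup_le (hmono hmn)

end Galois

-- `Qbar` carries the `ℚ`-algebra structure of a field of characteristic zero rather than that of
-- `AlgebraicClosure`, so `AlgebraicClosure.instIsAlgClosure` is only found by unification.
instance : IsGalois ℚ Qbar :=
  haveI := AlgebraicClosure.isAlgebraic ℚ
  haveI := @IsAlgClosure.normal ℚ Qbar _ _ _ (AlgebraicClosure.instIsAlgClosure ℚ)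
  IsGalois.mk

theorem stmt0 (P : GaloisPresentation) {k : ℕ} (φ : GrpFormula k) (hpos : φ.Positive)
    (a : Fin k → GalQ) :
    GrpFormula.Sat φ a ↔
      ∀ n : ℕ, GrpFormula.Sat φ (fun i => P.restrictAut n (a i)) :=
  hpos.sat_iff_forall_sat_restrictNormalHom P.F (normal := P.normal)
    (finiteDimensional := P.finiteDim) (monotone_nat_of_le_succ fun n => (P.F_lt n).le) P.unionEq a
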